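/- arXiv:2101.03898 — 5 statements merged into one kernel-verified Lean document; each statement's English description precedes it below -/
import Mathlib

section
/- For every positive integer t, there do not exist positive integers y₁, y₂ with y₁ + y₂ = 5t+2 and (y₁ choose 2) + (y₂ choose 2) = (3t+1 choose 2). -/
theorem no_two_clique_representation (t : ℕ) (ht : 0 < t) :
    ¬ ∃ y₁ y₂ : ℕ, 0 < y₁ ∧ 0 < y₂ ∧ y₁ + y₂ = 5 * t + 2 ∧
      Nat.choose y₁ 2 + Nat.choose y₂ 2 = Nat.choose (3 * t + 1) 2 := by
  rintro ⟨y₁, y₂, h1, h2, hsum, hch⟩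
  obtain ⟨a, rfl⟩ := Nat.exists_eq_add_of_lt h1
  obtain ⟨b, rfl⟩ := Nat.exists_eq_add_of_lt h2
  simp only [Nat.choose_two_right, Nat.add_sub_cancel, zero_add] at hch
  have ha : 2 ∣ (a + 1) * a := by rw [mul_comm]; exact (Nat.even_mul_succ_self a).two_dvd
  have hb : 2 ∣ (b + 1) * b := by rw [mul_comm]; exact (Nat.even_mul_succ_self b).two_dvd
  have hc : 2 ∣ (3 * t + 1) * (3 * t) := by
    rw [mul_comm]; exact (Nat.even_mul_succ_self (3 * t)).two_dvd
  have key : (a + 1) * a + (b + 1) * b = (3 * t + 1) * (3 * t) := by omega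
  nlinarith [sq_nonneg ((a : ℤ) - b), hsum, key]
end

section
/- The Pell-type equation x² - 7y² = -3 has infinitely many solutions in positive integers (x, y) with x even and y odd. -/
def pellSeq : ℕ → ℕ × ℕ
  | 0 => (2, 1)
  | n + 1 =>
    let p := pellSeq n
    (127 * p.1 + 336 * p.2, 48 * p.1 + 127 * p.2)

lemma pellSeq_mem (n : ℕ) :
    0 < (pellSeq n).1 ∧ 0 < (pellSeq n).2 ∧
      ((pellSeq n).1 : ℤ) ^ 2 - 7 * ((pellSeq n).2 : ℤ) ^ 2 = -3 ∧
      (pellSeq n).1 % 2 = 0 ∧ (pellSeq n).2 % 2 = 1 := by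
  induction n with
  | zero => simp [pellSeq]
  | succ n ih =>
    obtain ⟨ha, hb, heq, hpa, hpb⟩ := ih
    set a := (pellSeq n).1
    set b := (pellSeq n).2
    refine ⟨by simp [pellSeq]; omega, by simp [pellSeq]; omega, ?_, ?_, ?_⟩
    · show ((127 * a + 336 * b : ℕ) : ℤ) ^ 2 - 7 * ((48 * a + 127 * b : ℕ) : ℤ) ^ 2 = -3
      push_cast
      nlinarith [heq]
    · show (127 * a + 336 * b) % 2 = 0
      omega
    · show (48 * a + 127 * b) % 2 = 1
      omega

lemma pellSeq_fst_strictMono : StrictMono fun n => (pellSeq n).1 := by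
  apply strictMono_nat_of_lt_succ
  intro n
  have h := pellSeq_mem n
  show (pellSeq n).1 < 127 * (pellSeq n).1 + 336 * (pellSeq n).2
  omega

theorem pell_infinitely_many_solutions :
    {p : ℕ × ℕ | 0 < p.1 ∧ 0 < p.2 ∧ (p.1 : ℤ) ^ 2 - 7 * (p.2 : ℤ) ^ 2 = -3 ∧
      p.1 % 2 = 0 ∧ p.2 % 2 = 1}.Infinite := by
  apply Set.infinite_of_injective_forall_mem (f := pellSeq)
  · intro m n h
    exact pellSeq_fst_strictMono.injective (congrArg Prod.fst h)
  · intro n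
    exact pellSeq_mem n
end

section
/- If m is a positive integer and x is a nonnegative integer with x(m - x) = m(m-1)/4 (i.e., x(m-x) equals half of (m choose 2)), then m is a perfect square. -/
theorem m_perfect_square (m x : ℕ) (hm : 1 ≤ m) (hx : x ≤ m)
    (h : 4 * (x * (m - x)) = m * (m - 1)) :
    ∃ s : ℕ, m = s ^ 2 := by
  refine ⟨((m:ℤ) - 2*x).natAbs, ?_⟩
  have h' : ((m:ℤ) - 2*x)^2 = m := by
    have h2 : (4:ℤ) * (x * ((m:ℤ) - x)) = m * ((m:ℤ) - 1) := by
      zify [hx, hm] at h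
      linarith
    nlinarith
  zify
  rw [← Int.natAbs_sq (((m:ℤ) - 2*x))] at h'
  push_cast at h' ⊢
  linarith
end

section
/- There do not exist integers ℓ ≥ 1 and m ≥ 8 such that 2·(ℓ choose 2) = (m choose 2) and m is a perfect square. -/
lemma nat_sq_of_coprime {a b c : ℕ} (h : Nat.Coprime a b) (heq : a * b = c ^ 2) :
    ∃ r, a = r ^ 2 := by
  have hco : IsCoprime (a : ℤ) (b : ℤ) := Int.isCoprime_iff_gcd_eq_one.mpr (by
    simpa [Int.gcd_natCast_natCast] using h)
  have heq' : (a : ℤ) * b = (c : ℤ) ^ 2 := by exact_mod_cast heq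
  obtain ⟨r, hr | hr⟩ := Int.sq_of_isCoprime hco heq'
  · refine ⟨r.natAbs, ?_⟩
    have := congrArg Int.natAbs hr
    simpa [Int.natAbs_pow] using this
  · have h1 : (0:ℤ) ≤ r ^ 2 := sq_nonneg r
    have h2 : (0:ℤ) ≤ (a:ℤ) := Int.natCast_nonneg a
    have : (a:ℤ) = 0 := by omega
    exact ⟨0, by exact_mod_cast this⟩

lemma odd_sq_rep {y : ℕ} (h : y % 2 = 1) : ∃ t, y ^ 2 = 8 * t + 1 := by
  obtain ⟨k, rfl⟩ : ∃ k, y = 2 * k + 1 := ⟨y / 2, by omega⟩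
  rcases Nat.even_or_odd k with ⟨j, rfl⟩ | ⟨j, rfl⟩
  · exact ⟨j * (2 * j + 1), by ring⟩
  · exact ⟨(2 * j + 1) * (j + 1), by ring⟩

lemma consec_sq {a e : ℕ} (h : e ^ 2 + 1 = a ^ 2) : e = 0 := by
  rcases Nat.lt_or_ge e a with h1 | h1
  · nlinarith [Nat.succ_le_of_lt h1]
  · nlinarith [Nat.pow_le_pow_left h1 2]

lemma lemT {a q : ℕ} (h : a ^ 4 = 2 * q ^ 2 + 1) : a = 1 ∧ q = 0 := by
  have ha : a % 2 = 1 := by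
    rcases Nat.even_or_odd a with ⟨j, rfl⟩ | ho
    · exfalso
      have h16 : (j + j) ^ 4 = 16 * j ^ 4 := by ring
      rw [h16] at h
      omega
    · exact Nat.odd_iff.mp ho
  obtain ⟨j, rfl⟩ : ∃ j, a = 2 * j + 1 := ⟨a / 2, by omega⟩
  set v := 2 * j ^ 2 + 2 * j + 1 with hv
  have key : (4 * j * (j + 1)) * v = q ^ 2 := by nlinarith [h]
  have h4 : 4 * j * (j + 1) + 2 = 2 * v := by rw [hv]; ring
  have hco : Nat.Coprime (4 * j * (j + 1)) v := by
    set g := Nat.gcd (4 * j * (j + 1)) v with hg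
    have hd1 : g ∣ 4 * j * (j + 1) := Nat.gcd_dvd_left _ _
    have hd2 : g ∣ v := Nat.gcd_dvd_right _ _
    have hd3 : g ∣ 2 * v := Dvd.dvd.mul_left hd2 2
    have hsub : 2 * v - 4 * j * (j + 1) = 2 := by omega
    have hg2 : g ∣ 2 := by rw [← hsub]; exact Nat.dvd_sub hd3 hd1
    have hgle : g ≤ 2 := Nat.le_of_dvd (by norm_num) hg2
    have hgne : g ≠ 0 := by
      intro h0
      have := Nat.eq_zero_of_gcd_eq_zero_right (hg ▸ h0)
      omega
    have hgne2 : g ≠ 2 := by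
      intro h2
      obtain ⟨c, hc⟩ := hd2
      rw [h2] at hc
      omega
    omega
  obtain ⟨e, he⟩ := nat_sq_of_coprime hco key
  have hce : e ^ 2 + 1 = (2 * j + 1) ^ 2 := by rw [← he]; ring
  have he0 := consec_sq hce
  subst he0
  have hj : j = 0 := by nlinarith [he]
  subst hj
  refine ⟨rfl, ?_⟩
  have : q ^ 2 = 0 := by omega
  exact pow_eq_zero_iff (by norm_num) |>.mp this

lemma helperC {a b c : ℕ} (h : a ^ 2 + b ^ 2 = c ^ 2) (hco : Nat.Coprime a b)
    (ha : a % 2 = 1) (hb : 0 < b) :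
    ∃ P Q : ℕ, a + Q ^ 2 = P ^ 2 ∧ b = 2 * P * Q ∧ c = P ^ 2 + Q ^ 2 ∧
      Nat.Coprime P Q ∧ 0 < P ∧ 0 < Q := by
  have hpt : PythagoreanTriple (a : ℤ) (b : ℤ) (c : ℤ) := by
    unfold PythagoreanTriple
    push_cast
    nlinarith [h]
  have hgcd : Int.gcd (a : ℤ) (b : ℤ) = 1 := by simpa [Int.gcd_natCast_natCast] using hco
  have hap : (a : ℤ) % 2 = 1 := by omega
  have hcpos : (0 : ℤ) < c := by
    have : 0 < c := by nlinarith [h, hb]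
    exact_mod_cast this
  obtain ⟨m, n, hx, hy, hz, hmn, _hpar, hm0⟩ :=
    hpt.coprime_classification' hgcd hap hcpos
  have hmn0 : 0 < m * n := by
    have : (0:ℤ) < 2 * (m * n) := by rw [← mul_assoc, ← hy]; exact_mod_cast hb
    linarith
  have hmpos : 0 < m := lt_of_le_of_ne hm0 (by rintro rfl; simp at hmn0)
  have hnpos : 0 < n := by by_contra hc; push_neg at hc; nlinarith
  lift m to ℕ using hm0 with M
  lift n to ℕ using hnpos.le with N
  refine ⟨M, N, ?_, ?_, ?_, ?_, ?_, ?_⟩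
  · exact_mod_cast (by linarith [hx] : ((a:ℤ) + N ^ 2 = (M:ℤ) ^ 2))
  · exact_mod_cast hy
  · exact_mod_cast hz
  · simpa [Int.gcd_natCast_natCast] using hmn
  · exact_mod_cast hmpos
  · exact_mod_cast hnpos

lemma odd_of_dvd_odd {g n : ℕ} (hn : n % 2 = 1) (h : g ∣ n) : g % 2 = 1 := by
  rcases Nat.even_or_odd g with ⟨g₁, hgg⟩ | ho
  · exfalso
    obtain ⟨c, hc⟩ := h
    rw [hgg] at hc
    have : (g₁ + g₁) * c = 2 * (g₁ * c) := by ring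
    omega
  · exact Nat.odd_iff.mp ho

lemma odd_dvd_two_mul {g n : ℕ} (hg : g % 2 = 1) (h : g ∣ 2 * n) : g ∣ n := by
  have hco : Nat.Coprime g 2 := by
    rcases (Nat.dvd_prime Nat.prime_two).mp (Nat.gcd_dvd_right g 2) with h1 | h2
    · exact h1
    · exfalso
      obtain ⟨c, hc⟩ := h2 ▸ Nat.gcd_dvd_left g 2
      omega
  exact Nat.Coprime.dvd_of_dvd_mul_left hco h

lemma sqlt2 {a b : ℕ} (h : a ^ 2 < b ^ 2) : a < b := by
  by_contra hc
  push_neg at hc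
  exact absurd (Nat.pow_le_pow_left hc 2) (by omega)

lemma sqinj2 {a b : ℕ} (h : a ^ 2 = b ^ 2) : a = b :=
  Nat.pow_left_injective (by norm_num) h

lemma lemL (x : ℕ) : ∀ y w : ℕ, Nat.Coprime x y → x ^ 4 = y ^ 4 + w ^ 2 →
    y = 0 ∨ w = 0 := by
  induction x using Nat.strong_induction_on with
  | _ x IH =>
  intro y w hco h
  by_contra hcon
  push_neg at hcon
  obtain ⟨hy0, hw0⟩ := hcon
  have hy1 : 1 ≤ y := Nat.pos_of_ne_zero hy0
  have hw1 : 1 ≤ w := Nat.pos_of_ne_zero hw0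
  have hyx : y < x := by
    have h4 : y ^ 4 < x ^ 4 := by nlinarith
    by_contra hc
    push_neg at hc
    exact absurd (Nat.pow_le_pow_left hc 4) (by omega)
  have hx2 : 2 ≤ x := by omega
  have hysq : y ^ 2 < x ^ 2 := by nlinarith
  rcases Nat.even_or_odd x with hxe | hxo
  · -- x even, y odd: impossible mod 8
    obtain ⟨x₁, rfl⟩ := hxe
    have hyodd : y % 2 = 1 := by
      rcases Nat.even_or_odd y with ⟨y₁, hy⟩ | ho
      · exfalso
        have h2 : (2:ℕ) ∣ Nat.gcd (x₁ + x₁) y :=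
          Nat.dvd_gcd ⟨x₁, by ring⟩ ⟨y₁, by omega⟩
        rw [hco] at h2
        omega
      · exact Nat.odd_iff.mp ho
    obtain ⟨t, ht⟩ := odd_sq_rep hyodd
    have hy4 : y ^ 4 = 64 * t ^ 2 + 16 * t + 1 := by
      have e : y ^ 4 = (y ^ 2) ^ 2 := by ring
      rw [e, ht]; ring
    have hx4 : (x₁ + x₁) ^ 4 = 16 * x₁ ^ 4 := by ring
    rw [hx4, hy4] at h
    rcases Nat.even_or_odd w with ⟨w₁, hw⟩ | ho
    · have hw2 : w ^ 2 = 4 * w₁ ^ 2 := by rw [hw]; ring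
      omega
    · obtain ⟨r, hr⟩ := odd_sq_rep (Nat.odd_iff.mp ho)
      omega
  · have hxodd : x % 2 = 1 := Nat.odd_iff.mp hxo
    obtain ⟨p, hp⟩ := odd_sq_rep hxodd
    rcases Nat.even_or_odd y with hye | hyo
    · -- x odd, y even : descent via Pythagorean parametrization
      obtain ⟨y₁, hy⟩ := hye
      have hyy : y ^ 2 = 4 * y₁ ^ 2 := by rw [hy]; ring
      obtain ⟨D, hD⟩ : ∃ D, x ^ 2 = y ^ 2 + D := ⟨x ^ 2 - y ^ 2, by omega⟩
      have hDpos : 0 < D := by omega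
      have key : x ^ 4 = y ^ 4 + D * (x ^ 2 + y ^ 2) := by
        calc x ^ 4 = (x ^ 2) ^ 2 := by ring
          _ = (y ^ 2 + D) ^ 2 := by rw [hD]
          _ = y ^ 4 + D * ((y ^ 2 + D) + y ^ 2) := by ring
          _ = y ^ 4 + D * (x ^ 2 + y ^ 2) := by rw [← hD]
      have hprod : D * (x ^ 2 + y ^ 2) = w ^ 2 := by omega
      have hsumodd : (x ^ 2 + y ^ 2) % 2 = 1 := by omega
      have hDodd : D % 2 = 1 := by omega
      have hcoD : Nat.Coprime D (x ^ 2 + y ^ 2) := by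
        set g := Nat.gcd D (x ^ 2 + y ^ 2) with hg
        have hd1 : g ∣ D := Nat.gcd_dvd_left _ _
        have hd2 : g ∣ x ^ 2 + y ^ 2 := Nat.gcd_dvd_right _ _
        have hgodd : g % 2 = 1 := odd_of_dvd_odd hsumodd hd2
        have hdx : g ∣ x ^ 2 := by
          apply odd_dvd_two_mul hgodd
          have e : 2 * x ^ 2 = (x ^ 2 + y ^ 2) + D := by omega
          rw [e]; exact Nat.dvd_add hd2 hd1
        have hdy : g ∣ y ^ 2 := by
          apply odd_dvd_two_mul hgodd
          have e : 2 * y ^ 2 = (x ^ 2 + y ^ 2) - D := by omega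
          rw [e]; exact Nat.dvd_sub hd2 hd1
        have hcp : Nat.Coprime (x ^ 2) (y ^ 2) := Nat.Coprime.pow 2 2 hco
        have hg1 : g = 1 := Nat.dvd_one.mp (hcp ▸ Nat.dvd_gcd hdx hdy)
        omega
      obtain ⟨u, hu⟩ := nat_sq_of_coprime hcoD hprod
      obtain ⟨v, hv⟩ := nat_sq_of_coprime hcoD.symm (by rw [mul_comm]; exact hprod)
      rw [hu] at hD hcoD
      rw [hv] at hcoD
      have hcouv : Nat.Coprime u v := by
        have h2 := hcoD
        rwa [Nat.coprime_pow_left_iff (by norm_num),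
          Nat.coprime_pow_right_iff (by norm_num)] at h2
      have hupos : 0 < u := by
        rcases Nat.eq_zero_or_pos u with rfl | h' 
        · exfalso; simp at hu; omega
        · exact h'
      have hy1sq : 0 < y₁ ^ 2 := by
        have : 0 < y₁ := by omega
        positivity
      have hvu : u < v := by
        apply sqlt2
        have e : u ^ 2 < x ^ 2 + y ^ 2 := by omega
        omega
      have huodd : u % 2 = 1 := by
        rcases Nat.even_or_odd u with ⟨uu, hk⟩ | hk
        · exfalso
          have e : u ^ 2 = 4 * uu ^ 2 := by rw [hk]; ring
          omega
        · exact Nat.odd_iff.mp hk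
      have hvodd : v % 2 = 1 := by
        rcases Nat.even_or_odd v with ⟨vv, hk⟩ | hk
        · exfalso
          have e : v ^ 2 = 4 * vv ^ 2 := by rw [hk]; ring
          omega
        · exact Nat.odd_iff.mp hk
      obtain ⟨hh, hhh⟩ : ∃ hh, v = u + 2 * hh := ⟨(v - u) / 2, by omega⟩
      have hhpos : 0 < hh := by omega
      have hy2 : y ^ 2 = 2 * ((u + hh) * hh) := by
        have e1 : (u + 2 * hh) ^ 2 = u ^ 2 + 4 * ((u + hh) * hh) := by ring
        have e2 : x ^ 2 + y ^ 2 = (u + 2 * hh) ^ 2 := by rw [← hhh, ← hv]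
        rw [e1] at e2
        omega
      have hgh : (u + hh) * hh = 2 * y₁ ^ 2 := by omega
      have hxgh : (u + hh) ^ 2 + hh ^ 2 = x ^ 2 := by
        have e : (u + hh) ^ 2 + hh ^ 2 = u ^ 2 + 2 * ((u + hh) * hh) := by ring
        omega
      have hcogh : Nat.Coprime (u + hh) hh := by
        set g := Nat.gcd (u + hh) hh with hg
        have hd1 : g ∣ u + hh := Nat.gcd_dvd_left _ _
        have hd2 : g ∣ hh := Nat.gcd_dvd_right _ _
        have hdu : g ∣ u := by
          have e : u = (u + hh) - hh := by omega
          rw [e]; exact Nat.dvd_sub hd1 hd2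
        have hdv : g ∣ v := by
          rw [hhh]; exact Nat.dvd_add hdu (Dvd.dvd.mul_left hd2 2)
        have hg1 : g = 1 := Nat.dvd_one.mp (hcouv ▸ Nat.dvd_gcd hdu hdv)
        omega
      have hpar : ((u + hh) % 2 = 1 ∧ hh % 2 = 0) ∨ ((u + hh) % 2 = 0 ∧ hh % 2 = 1) := by
        have hsum : ((u + hh) ^ 2 + hh ^ 2) % 2 = 1 := by rw [hxgh]; omega
        rcases Nat.even_or_odd (u + hh) with ⟨a1, ha1⟩ | ha1 <;>
          rcases Nat.even_or_odd hh with ⟨b1, hb1⟩ | hb1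
        · exfalso
          have e1 : (u + hh) ^ 2 = 4 * a1 ^ 2 := by rw [ha1]; ring
          have e2 : hh ^ 2 = 4 * b1 ^ 2 := by rw [hb1]; ring
          omega
        · exact Or.inr ⟨by omega, Nat.odd_iff.mp hb1⟩
        · exact Or.inl ⟨Nat.odd_iff.mp ha1, by omega⟩
        · exfalso
          obtain ⟨a2, ha2⟩ := odd_sq_rep (Nat.odd_iff.mp ha1)
          obtain ⟨b2, hb2⟩ := odd_sq_rep (Nat.odd_iff.mp hb1)
          omega
      rcases hpar with ⟨hgo, hhe⟩ | ⟨hge, hho⟩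
      · -- u+hh odd, hh even
        obtain ⟨h₁, hh1⟩ : ∃ h₁, hh = 2 * h₁ := ⟨hh / 2, by omega⟩
        have hgh1 : (u + hh) * h₁ = y₁ ^ 2 := by
          have e : (u + hh) * hh = 2 * ((u + hh) * h₁) := by rw [hh1]; ring
          omega
        have hco1 : Nat.Coprime (u + hh) h₁ :=
          Nat.Coprime.coprime_dvd_right ⟨2, by omega⟩ hcogh
        obtain ⟨r, hr⟩ := nat_sq_of_coprime hco1 hgh1
        obtain ⟨t, htt⟩ := nat_sq_of_coprime hco1.symm (by rw [mul_comm]; exact hgh1)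
        obtain ⟨P, Q, hPQ1, hPQ2, hPQ3, hPQco, hPpos, hQpos⟩ :=
          helperC hxgh hcogh hgo (by omega)
        have hPQr : P * Q = t ^ 2 := by
          have e : 2 * P * Q = 2 * (P * Q) := by ring
          omega
        obtain ⟨i, hi⟩ := nat_sq_of_coprime hPQco hPQr
        obtain ⟨j, hj⟩ := nat_sq_of_coprime hPQco.symm (by rw [mul_comm]; exact hPQr)
        have hdesc : i ^ 4 = j ^ 4 + r ^ 2 := by
          have e1 : P ^ 2 = (i ^ 2) ^ 2 := by rw [hi]
          have e2 : Q ^ 2 = (j ^ 2) ^ 2 := by rw [hj]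
          have e3 : (i ^ 2) ^ 2 = i ^ 4 := by ring
          have e4 : (j ^ 2) ^ 2 = j ^ 4 := by ring
          have e5 : u + hh = r ^ 2 := hr
          omega
        have hcoij : Nat.Coprime i j := by
          have h2 := hPQco
          rw [hi, hj, Nat.coprime_pow_left_iff (by norm_num),
            Nat.coprime_pow_right_iff (by norm_num)] at h2
          exact h2
        have hilt : i < x := by
          have e1 : i ≤ i ^ 2 := Nat.le_self_pow (by norm_num) i
          have e2 : P ≤ P ^ 2 := Nat.le_self_pow (by norm_num) P
          have e3 : 0 < Q ^ 2 := by positivity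
          omega
        rcases IH i hilt j r hcoij hdesc with hj0 | hr0
        · rw [hj0] at hj; simp at hj; omega
        · rw [hr0] at hr; simp at hr; omega
      · -- u+hh even, hh odd
        obtain ⟨g₁, hg1⟩ : ∃ g₁, u + hh = 2 * g₁ := ⟨(u + hh) / 2, by omega⟩
        have hgh1 : g₁ * hh = y₁ ^ 2 := by
          have e : (u + hh) * hh = 2 * (g₁ * hh) := by rw [hg1]; ring
          omega
        have hco1 : Nat.Coprime g₁ hh :=
          Nat.Coprime.coprime_dvd_left ⟨2, by omega⟩ hcogh
        obtain ⟨r, hr⟩ := nat_sq_of_coprime hco1 hgh1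
        obtain ⟨t, htt⟩ := nat_sq_of_coprime hco1.symm (by rw [mul_comm]; exact hgh1)
        have hxgh' : hh ^ 2 + (u + hh) ^ 2 = x ^ 2 := by omega
        obtain ⟨P, Q, hPQ1, hPQ2, hPQ3, hPQco, hPpos, hQpos⟩ :=
          helperC hxgh' (Nat.Coprime.symm hcogh) hho (by omega)
        have hPQr : P * Q = r ^ 2 := by
          have e : 2 * P * Q = 2 * (P * Q) := by ring
          omega
        obtain ⟨i, hi⟩ := nat_sq_of_coprime hPQco hPQr
        obtain ⟨j, hj⟩ := nat_sq_of_coprime hPQco.symm (by rw [mul_comm]; exact hPQr)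
        have hdesc : i ^ 4 = j ^ 4 + t ^ 2 := by
          have e1 : P ^ 2 = (i ^ 2) ^ 2 := by rw [hi]
          have e2 : Q ^ 2 = (j ^ 2) ^ 2 := by rw [hj]
          have e3 : (i ^ 2) ^ 2 = i ^ 4 := by ring
          have e4 : (j ^ 2) ^ 2 = j ^ 4 := by ring
          have e5 : hh = t ^ 2 := htt
          omega
        have hcoij : Nat.Coprime i j := by
          have h2 := hPQco
          rw [hi, hj, Nat.coprime_pow_left_iff (by norm_num),
            Nat.coprime_pow_right_iff (by norm_num)] at h2
          exact h2
        have hilt : i < x := by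
          have e1 : i ≤ i ^ 2 := Nat.le_self_pow (by norm_num) i
          have e2 : P ≤ P ^ 2 := Nat.le_self_pow (by norm_num) P
          have e3 : 0 < Q ^ 2 := by positivity
          omega
        rcases IH i hilt j t hcoij hdesc with hj0 | ht0
        · rw [hj0] at hj; simp at hj; omega
        · rw [ht0] at htt; simp at htt; omega
    · -- both odd
      have hyodd : y % 2 = 1 := Nat.odd_iff.mp hyo
      obtain ⟨q, hq⟩ := odd_sq_rep hyodd
      obtain ⟨A, hA⟩ : ∃ A, x ^ 2 = y ^ 2 + 2 * A := ⟨4 * (p - q), by omega⟩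
      have hApos : 0 < A := by omega
      have key : x ^ 4 = y ^ 4 + 4 * (A * (A + y ^ 2)) := by
        calc x ^ 4 = (x ^ 2) ^ 2 := by ring
          _ = (y ^ 2 + 2 * A) ^ 2 := by rw [hA]
          _ = y ^ 4 + 4 * (A * (A + y ^ 2)) := by ring
      have hweven : w % 2 = 0 := by
        rcases Nat.even_or_odd w with he | ho
        · exact Nat.even_iff.mp he
        · exfalso
          obtain ⟨r, hr⟩ := odd_sq_rep (Nat.odd_iff.mp ho)
          omega
      obtain ⟨w₁, hw⟩ : ∃ w₁, w = 2 * w₁ := ⟨w / 2, by omega⟩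
      have hw2 : w ^ 2 = 4 * w₁ ^ 2 := by rw [hw]; ring
      have hprod : A * (A + y ^ 2) = w₁ ^ 2 := by omega
      have hcoAB : Nat.Coprime A (A + y ^ 2) := by
        set g := Nat.gcd A (A + y ^ 2) with hg
        have hd1 : g ∣ A := Nat.gcd_dvd_left _ _
        have hd2 : g ∣ A + y ^ 2 := Nat.gcd_dvd_right _ _
        have hdy : g ∣ y ^ 2 := by
          have e : y ^ 2 = (A + y ^ 2) - A := by omega
          rw [e]; exact Nat.dvd_sub hd2 hd1
        have hdx : g ∣ x ^ 2 := by
          have e : x ^ 2 = y ^ 2 + 2 * A := hA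
          rw [e]; exact Nat.dvd_add hdy (Dvd.dvd.mul_left hd1 2)
        have hcp : Nat.Coprime (x ^ 2) (y ^ 2) := Nat.Coprime.pow 2 2 hco
        have hg1 : g = 1 := Nat.dvd_one.mp (hcp ▸ Nat.dvd_gcd hdx hdy)
        omega
      obtain ⟨a₁, ha₁⟩ := nat_sq_of_coprime hcoAB hprod
      obtain ⟨b₁, hb₁⟩ := nat_sq_of_coprime hcoAB.symm (by rw [mul_comm]; exact hprod)
      have hdesc : b₁ ^ 4 = a₁ ^ 4 + (x * y) ^ 2 := by
        have e1 : b₁ ^ 4 = (A + y ^ 2) ^ 2 := by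
          calc b₁ ^ 4 = (b₁ ^ 2) ^ 2 := by ring
            _ = (A + y ^ 2) ^ 2 := by rw [hb₁]
        have e2 : (x * y) ^ 2 = (y ^ 2 + 2 * A) * y ^ 2 := by
          calc (x * y) ^ 2 = x ^ 2 * y ^ 2 := by ring
            _ = (y ^ 2 + 2 * A) * y ^ 2 := by rw [hA]
        rw [ha₁] at e1 e2
        linear_combination e1 - e2
      have hcoab : Nat.Coprime b₁ a₁ := by
        have h2 := hcoAB
        rw [hb₁] at h2
        rw [ha₁, Nat.coprime_pow_left_iff (by norm_num),
          Nat.coprime_pow_right_iff (by norm_num)] at h2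
        exact h2.symm
      have hblt : b₁ < x := by
        apply sqlt2
        omega
      rcases IH b₁ hblt a₁ (x * y) hcoab hdesc with ha0 | hxy0
      · rw [ha0] at ha₁; simp at ha₁; omega
      · have : 0 < x * y := Nat.mul_pos (by omega) (by omega)
        omega

lemma pow4_eq_one {a : ℕ} (h : a ^ 4 = 1) : a = 1 := by
  rcases Nat.lt_or_ge a 2 with h2 | h2
  · interval_cases a
    · simp at h
    · rfl
  · exfalso
    have : 2 ^ 4 ≤ a ^ 4 := Nat.pow_le_pow_left h2 4
    omega

theorem no_square_m_solution :
    ¬ ∃ ℓ m : ℕ, 1 ≤ ℓ ∧ 8 ≤ m ∧ 2 * Nat.choose ℓ 2 = Nat.choose m 2 ∧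
      ∃ s : ℕ, m = s ^ 2 := by
  rintro ⟨ℓ, m, hl, hm, hch, s, rfl⟩
  obtain ⟨n, rfl⟩ : ∃ n, ℓ = n + 1 := ⟨ℓ - 1, by omega⟩
  obtain ⟨u, hu⟩ : ∃ u, s ^ 2 = u + 1 := ⟨s ^ 2 - 1, by omega⟩
  have hu7 : 7 ≤ u := by omega
  rw [Nat.choose_two_right, Nat.choose_two_right, hu] at hch
  simp only [Nat.add_sub_cancel] at hch
  have hdiv1 : 2 ∣ (n + 1) * n := by
    have := Nat.even_mul_succ_self n
    obtain ⟨k, hk⟩ := this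
    exact ⟨k, by rw [Nat.mul_comm]; omega⟩
  have hdiv2 : 2 ∣ (u + 1) * u := by
    have := Nat.even_mul_succ_self u
    obtain ⟨k, hk⟩ := this
    exact ⟨k, by rw [Nat.mul_comm]; omega⟩
  have key : 2 * ((n + 1) * n) = (u + 1) * u := by omega
  have htu : (2 * n + 1) ^ 2 = u ^ 2 + (u + 1) ^ 2 := by
    have e1 : (2 * n + 1) ^ 2 = 4 * ((n + 1) * n) + 1 := by ring
    have e2 : u ^ 2 + (u + 1) ^ 2 = 2 * ((u + 1) * u) + 1 := by ring
    omega
  have hcou : Nat.Coprime u (u + 1) := by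
    have h1 : Nat.gcd u (u + 1) ∣ u := Nat.gcd_dvd_left _ _
    have h2 : Nat.gcd u (u + 1) ∣ u + 1 := Nat.gcd_dvd_right _ _
    have h3 : Nat.gcd u (u + 1) ∣ 1 := by simpa using Nat.dvd_sub h2 h1
    exact Nat.dvd_one.mp h3
  rcases Nat.even_or_odd u with hue | huo
  · -- u even: s odd. Triple ((u+1), u, 2n+1)
    have hueven : u % 2 = 0 := Nat.even_iff.mp hue
    have htri : (u + 1) ^ 2 + u ^ 2 = (2 * n + 1) ^ 2 := by omega
    obtain ⟨P, Q, hP1, hP2, _hP3, hPQco, hPpos, hQpos⟩ :=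
      helperC htri hcou.symm (by omega) (by omega)
    have hQP : Q < P := by
      apply sqlt2
      omega
    obtain ⟨d, hd⟩ : ∃ d, P = Q + d := ⟨P - Q, by omega⟩
    have hdpos : 0 < d := by omega
    have hfac : d * (2 * Q + d) = s ^ 2 := by
      have e : (Q + d) ^ 2 = Q ^ 2 + d * (2 * Q + d) := by ring
      rw [hd] at hP1
      omega
    have hdodd : d % 2 = 1 :=
      odd_of_dvd_odd (n := u + 1) (by omega) ⟨2 * Q + d, by omega⟩
    have hcofac : Nat.Coprime d (2 * Q + d) := by
      set g := Nat.gcd d (2 * Q + d) with hg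
      have h1 : g ∣ d := Nat.gcd_dvd_left _ _
      have h2 : g ∣ 2 * Q + d := Nat.gcd_dvd_right _ _
      have hgodd : g % 2 = 1 := odd_of_dvd_odd hdodd h1
      have h3 : g ∣ 2 * Q := by
        have e : 2 * Q = (2 * Q + d) - d := by omega
        rw [e]; exact Nat.dvd_sub h2 h1
      have h4 : g ∣ Q := odd_dvd_two_mul hgodd h3
      have h5 : g ∣ P := by rw [hd]; exact Nat.dvd_add h4 h1
      have h6 : g = 1 := Nat.dvd_one.mp (hPQco ▸ Nat.dvd_gcd h5 h4)
      omega
    obtain ⟨a₂, ha₂⟩ := nat_sq_of_coprime hcofac hfac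
    have hT : a₂ ^ 4 = 2 * Q ^ 2 + 1 := by
      rw [ha₂] at hfac hd
      have e1 : a₂ ^ 2 * (2 * Q + a₂ ^ 2) = 2 * (Q * a₂ ^ 2) + a₂ ^ 4 := by ring
      have e2 : 2 * (Q + a₂ ^ 2) * Q = 2 * Q ^ 2 + 2 * (Q * a₂ ^ 2) := by ring
      rw [hd] at hP2
      omega
    obtain ⟨_, hQ0⟩ := lemT hT
    omega
  · -- u odd: s even. Triple (u, u+1, 2n+1)
    have huodd : u % 2 = 1 := Nat.odd_iff.mp huo
    have htri : u ^ 2 + (u + 1) ^ 2 = (2 * n + 1) ^ 2 := htu.symm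
    obtain ⟨P, Q, hP1, hP2, _hP3, hPQco, hPpos, hQpos⟩ :=
      helperC htri hcou huodd (by omega)
    -- s is even
    have hseven : s % 2 = 0 := by
      rcases Nat.even_or_odd s with he | ho
      · exact Nat.even_iff.mp he
      · exfalso
        obtain ⟨r, hr⟩ := odd_sq_rep (Nat.odd_iff.mp ho)
        omega
    obtain ⟨s₁, hs₁⟩ : ∃ s₁, s = 2 * s₁ := ⟨s / 2, by omega⟩
    have hs2 : s ^ 2 = 4 * s₁ ^ 2 := by rw [hs₁]; ring
    have hPQs : P * Q = 2 * s₁ ^ 2 := by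
      have e : 2 * P * Q = 2 * (P * Q) := by ring
      omega
    rcases Nat.even_or_odd P with hPe | hPo
    · -- P even, Q odd
      have hPeven : P % 2 = 0 := Nat.even_iff.mp hPe
      have hQodd : Q % 2 = 1 := by
        rcases Nat.even_or_odd Q with hQe | hQo
        · exfalso
          have h2 : (2:ℕ) ∣ Nat.gcd P Q :=
            Nat.dvd_gcd (by omega) (by have := Nat.even_iff.mp hQe; omega)
          rw [hPQco] at h2
          omega
        · exact Nat.odd_iff.mp hQo
      obtain ⟨P₁, hPP⟩ : ∃ P₁, P = 2 * P₁ := ⟨P / 2, by omega⟩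
      have hP₁Q : P₁ * Q = s₁ ^ 2 := by
        have e : 2 * P₁ * Q = 2 * (P₁ * Q) := by rw [Nat.mul_assoc]
        rw [hPP] at hPQs
        omega
      have hcoP₁Q : Nat.Coprime P₁ Q :=
        Nat.Coprime.coprime_dvd_left ⟨2, by omega⟩ hPQco
      obtain ⟨α, hα⟩ := nat_sq_of_coprime hcoP₁Q hP₁Q
      obtain ⟨β, hβ⟩ := nat_sq_of_coprime hcoP₁Q.symm (by rw [mul_comm]; exact hP₁Q)
      have eP : P ^ 2 = 4 * α ^ 4 := by rw [hPP, hα]; ring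
      have eQ : Q ^ 2 = β ^ 4 := by rw [hβ]; ring
      have ePQ : 2 * P * Q = 4 * (α ^ 2 * β ^ 2) := by rw [hPP, hα, hβ]; ring
      have hβodd : β % 2 = 1 := by
        rcases Nat.even_or_odd β with ⟨β₁, hk⟩ | hk
        · exfalso
          have e : β ^ 2 = 4 * β₁ ^ 2 := by rw [hk]; ring
          omega
        · exact Nat.odd_iff.mp hk
      have hD : (2 * α ^ 2 + β ^ 2) ^ 2 = 8 * α ^ 4 + 1 := by
        have e : (2 * α ^ 2 + β ^ 2) ^ 2 = 4 * α ^ 4 + 4 * (α ^ 2 * β ^ 2) + β ^ 4 := by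
          ring
        omega
      obtain ⟨k, hk⟩ : ∃ k, 2 * α ^ 2 + β ^ 2 = 2 * k + 1 := ⟨α ^ 2 + (β ^ 2 - 1) / 2, by omega⟩
      have hkk : k * (k + 1) = 2 * α ^ 4 := by
        have e : (2 * k + 1) ^ 2 = 4 * (k * (k + 1)) + 1 := by ring
        rw [hk] at hD
        omega
      have hcok : Nat.Coprime k (k + 1) := by
        have h1 : Nat.gcd k (k + 1) ∣ k := Nat.gcd_dvd_left _ _
        have h2 : Nat.gcd k (k + 1) ∣ k + 1 := Nat.gcd_dvd_right _ _
        exact Nat.dvd_one.mp (by simpa using Nat.dvd_sub h2 h1)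
      rcases Nat.even_or_odd k with hke | hko
      · -- k even : k+1 = a^4, k = 2 c^4, a^4 = 2c^4+1
        obtain ⟨k₁, hk₁⟩ : ∃ k₁, k = 2 * k₁ := ⟨k / 2, by have := Nat.even_iff.mp hke; omega⟩
        have hprod : k₁ * (k + 1) = (α ^ 2) ^ 2 := by
          have e1 : k * (k + 1) = 2 * (k₁ * (k + 1)) := by rw [hk₁]; ring
          have e2 : (α ^ 2) ^ 2 = α ^ 4 := by ring
          omega
        have hcok₁ : Nat.Coprime k₁ (k + 1) :=
          Nat.Coprime.coprime_dvd_left ⟨2, by omega⟩ hcok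
        obtain ⟨e₁, he₁⟩ := nat_sq_of_coprime hcok₁ hprod
        obtain ⟨f₁, hf₁⟩ := nat_sq_of_coprime hcok₁.symm (by rw [mul_comm]; exact hprod)
        have hef : e₁ * f₁ = α ^ 2 := by
          apply sqinj2
          have e : (e₁ * f₁) ^ 2 = e₁ ^ 2 * f₁ ^ 2 := by ring
          rw [e, ← he₁, ← hf₁, hprod]
        have hcoef : Nat.Coprime e₁ f₁ := by
          have h2 := hcok₁
          rw [he₁, hf₁, Nat.coprime_pow_left_iff (by norm_num),
            Nat.coprime_pow_right_iff (by norm_num)] at h2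
          exact h2
        obtain ⟨c, hc⟩ := nat_sq_of_coprime hcoef hef
        obtain ⟨a, ha⟩ := nat_sq_of_coprime hcoef.symm (by rw [mul_comm]; exact hef)
        have hka : k + 1 = a ^ 4 := by
          rw [hf₁, ha]; ring
        have hkc : k₁ = c ^ 4 := by rw [he₁, hc]; ring
        have hT : a ^ 4 = 2 * (c ^ 2) ^ 2 + 1 := by
          have e : (c ^ 2) ^ 2 = c ^ 4 := by ring
          omega
        obtain ⟨ha1, hc0⟩ := lemT hT
        -- c^2 = 0, so k₁ = 0, k = 0, α = 0, contradiction with u+1 = 4 α² β²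
        have hc00 : c = 0 := by
          rcases Nat.eq_zero_or_pos c with h' | h'
          · exact h'
          · exfalso; have : 0 < c ^ 2 := by positivity
            omega
        have ec : c ^ 4 = 0 := by rw [hc00]; norm_num
        have hk0 : k = 0 := by omega
        have e0 : k * (k + 1) = 0 := by rw [hk0]
        have hα0 : α ^ 4 = 0 := by omega
        have hαz : α = 0 := by
          rcases Nat.eq_zero_or_pos α with h' | h'
          · exact h'
          · exfalso; have : 0 < α ^ 4 := by positivity
            omega
        have eα : α ^ 2 * β ^ 2 = 0 := by rw [hαz]; ring
        omega
      · -- k odd : k = a^4, k+1 = 2 c^4, 2c^4 = a^4+1 -> lemL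
        have hkodd : k % 2 = 1 := Nat.odd_iff.mp hko
        obtain ⟨k₂, hk₂⟩ : ∃ k₂, k + 1 = 2 * k₂ := ⟨(k + 1) / 2, by omega⟩
        have hprod : k * k₂ = (α ^ 2) ^ 2 := by
          have e1 : k * (2 * k₂) = 2 * (k * k₂) := by ring
          have e2 : (α ^ 2) ^ 2 = α ^ 4 := by ring
          rw [hk₂] at hkk
          omega
        have hcok₂ : Nat.Coprime k k₂ :=
          Nat.Coprime.coprime_dvd_right ⟨2, by omega⟩ hcok
        obtain ⟨e₁, he₁⟩ := nat_sq_of_coprime hcok₂ hprod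
        obtain ⟨f₁, hf₁⟩ := nat_sq_of_coprime hcok₂.symm (by rw [mul_comm]; exact hprod)
        have hef : e₁ * f₁ = α ^ 2 := by
          apply sqinj2
          have e : (e₁ * f₁) ^ 2 = e₁ ^ 2 * f₁ ^ 2 := by ring
          rw [e, ← he₁, ← hf₁, hprod]
        have hcoef : Nat.Coprime e₁ f₁ := by
          have h2 := hcok₂
          rw [he₁, hf₁, Nat.coprime_pow_left_iff (by norm_num),
            Nat.coprime_pow_right_iff (by norm_num)] at h2
          exact h2
        obtain ⟨a, ha⟩ := nat_sq_of_coprime hcoef hef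
        obtain ⟨c, hc⟩ := nat_sq_of_coprime hcoef.symm (by rw [mul_comm]; exact hef)
        have hka : k = a ^ 4 := by rw [he₁, ha]; ring
        have hkc : k₂ = c ^ 4 := by rw [hf₁, hc]; ring
        -- 2 c^4 = a^4 + 1
        have hcc : 2 * c ^ 4 = a ^ 4 + 1 := by omega
        have haodd : a ^ 4 % 2 = 1 := by omega
        obtain ⟨ww, hww⟩ : ∃ ww, a ^ 4 = 2 * ww + 1 := ⟨(a ^ 4 - 1) / 2, by omega⟩
        have hc4 : c ^ 4 = ww + 1 := by omega
        have hdesc : (c ^ 2) ^ 4 = a ^ 4 + ww ^ 2 := by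
          have e1 : (c ^ 2) ^ 4 = (c ^ 4) ^ 2 := by ring
          rw [e1, hc4]
          have e2 : (ww + 1) ^ 2 = ww ^ 2 + 2 * ww + 1 := by ring
          omega
        have hcoca : Nat.Coprime (c ^ 2) a := by
          set g := Nat.gcd (c ^ 2) a with hg
          have h1 : g ∣ c ^ 2 := Nat.gcd_dvd_left _ _
          have h2 : g ∣ a := Nat.gcd_dvd_right _ _
          have h3 : g ∣ a ^ 4 := Dvd.dvd.pow h2 (by norm_num)
          have h4 : g ∣ 2 * c ^ 4 := by
            have e : 2 * c ^ 4 = 2 * c ^ 2 * c ^ 2 := by ring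
            rw [e]; exact Dvd.dvd.mul_left h1 _
          have h5 : g ∣ 1 := by
            have e : 1 = 2 * c ^ 4 - a ^ 4 := by omega
            rw [e]; exact Nat.dvd_sub h4 h3
          have := Nat.dvd_one.mp h5
          omega
        rcases lemL (c ^ 2) a ww hcoca hdesc with ha0 | hw0
        · rw [ha0] at hww; simp at hww
        · -- ww = 0: a=1, k=1, α=1, β=1, u+1=4: contradiction with u ≥ 7
          rw [hw0] at hww
          have ha1 : a = 1 := pow4_eq_one (by omega)
          have hk1 : k = 1 := by rw [hka, ha1]; norm_num
          have e0 : k * (k + 1) = 2 := by rw [hk1]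
          have hα1 : α ^ 4 = 1 := by omega
          have hα2 : α = 1 := pow4_eq_one hα1
          have eα2 : α ^ 2 = 1 := by rw [hα2]; norm_num
          have hβ2 : β ^ 2 = 1 := by omega
          have eβ : α ^ 2 * β ^ 2 = 1 := by rw [hα2, hβ2]; norm_num
          omega
    · -- P odd: contradiction mod 4
      have hPodd : P % 2 = 1 := Nat.odd_iff.mp hPo
      have hQeven : Q % 2 = 0 := by
        rcases Nat.even_or_odd Q with hQe | hQo
        · exact Nat.even_iff.mp hQe
        · exfalso
          have : Odd (P * Q) := Nat.odd_mul.mpr ⟨hPo, hQo⟩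
          have h2 := Nat.odd_iff.mp this
          omega
      obtain ⟨pp, hpp⟩ := odd_sq_rep hPodd
      obtain ⟨Q₁, hQ₁⟩ : ∃ Q₁, Q = 2 * Q₁ := ⟨Q / 2, by omega⟩
      have e1 : Q ^ 2 = 4 * Q₁ ^ 2 := by rw [hQ₁]; ring
      have e2 : 2 * P * Q = 4 * (P * Q₁) := by rw [hQ₁]; ring
      omega
end

section
/- Let q = p^k be an odd prime power with p ∤ 5, and let S(q,a) = Σ_{1 ≤ x₁,x₂,x₃,x₄ ≤ q} e((a/q)·Q(x)) where Q(x) = x₁²+x₂²+x₃²+x₄²+(x₁+x₂+x₃+x₄-n)², gcd(a,q)=1. Then |S(q,a)| ≤ q² when p ∤ 10, |S(q,a)| ≤ √5·q² when p = 5, and |S(q,a)| ≤ 4q² when p = 2. -/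
/-!
Over `(ZMod q)⁴` the summand is `ψ(a Q(x))` for the standard additive character `ψ`. Squaring out
(Weyl differencing), `|S|²` is at most the sum over shifts `h` of `|∑ₓ ψ(a (Q(x + h) - Q(x)))|`,
and `Q(x + h) - Q(x)` is affine in `x` with linear coefficients `2 (hᵢ + ∑ⱼ hⱼ)`. By orthogonality
the inner sum has modulus `q⁴` if all of these vanish and `0` otherwise, so `|S|² ≤ q⁴ · #H` with
`H = {h | 2 (hᵢ + ∑ⱼ hⱼ) = 0 for all i}`. If `2` is invertible, `h ∈ H` is determined by
`s = ∑ⱼ hⱼ`, and `5 s = 0`; if `5` is invertible, it is determined by the `2`-torsion vector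
`(hᵢ + ∑ⱼ hⱼ)ᵢ`. In the cyclic group `ZMod q` this leaves at most `1`, `5` or `2⁴` shifts.
-/

open Complex Finset

/-- The complete exponential sum `S(q, a) = ∑_{1 ≤ x₁,x₂,x₃,x₄ ≤ q} e((a/q)·Q(x))`
where `Q(x) = x₁² + x₂² + x₃² + x₄² + (x₁ + x₂ + x₃ + x₄ - n)²`. -/
noncomputable def expSumS (n q a : ℕ) : ℂ :=
  ∑ x₁ ∈ Icc 1 q, ∑ x₂ ∈ Icc 1 q, ∑ x₃ ∈ Icc 1 q, ∑ x₄ ∈ Icc 1 q,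
    Complex.exp (2 * Real.pi * Complex.I * ((a : ℂ) / (q : ℂ)) *
      ((x₁ : ℂ) ^ 2 + (x₂ : ℂ) ^ 2 + (x₃ : ℂ) ^ 2 + (x₄ : ℂ) ^ 2 +
        ((x₁ : ℂ) + x₂ + x₃ + x₄ - (n : ℂ)) ^ 2))

open ComplexConjugate

theorem AddChar.map_sum_eq_prod {ι A M : Type*} [AddCommMonoid A] [CommMonoid M]
    (ψ : AddChar A M) (s : Finset ι) (f : ι → A) : ψ (∑ i ∈ s, f i) = ∏ i ∈ s, ψ (f i) := by
  classical
  induction s using Finset.induction_on with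
  | empty => simp
  | insert i s hi ih => rw [Finset.sum_insert hi, Finset.prod_insert hi, map_add_eq_mul, ih]

theorem norm_sum_sq_le_sum_norm_sum_mul_conj {G : Type*} [AddCommGroup G] [Fintype G]
    (f : G → ℂ) : ‖∑ x, f x‖ ^ 2 ≤ ∑ h, ‖∑ x, f (x + h) * conj (f x)‖ := by
  have hcorr : (∑ x, f x) * conj (∑ x, f x) = ∑ h, ∑ x, f (x + h) * conj (f x) := by
    rw [Finset.sum_comm (f := fun h x => f (x + h) * conj (f x)), map_sum, Fintype.sum_mul_sum,
      Finset.sum_comm]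
    refine sum_congr rfl fun y _ => ?_
    exact (Equiv.sum_comp (Equiv.addLeft y) fun x => f x * conj (f y)).symm
  calc ‖∑ x, f x‖ ^ 2 = ‖(∑ x, f x) * conj (∑ x, f x)‖ := by
        rw [norm_mul, Complex.norm_conj, sq]
    _ ≤ _ := hcorr ▸ norm_sum_le _ _

theorem AddChar.sum_pi_sum_mul_eq_ite {R ι : Type*} [CommRing R] [Fintype R] [DecidableEq R]
    [Fintype ι] [DecidableEq ι] {ψ : AddChar R ℂ} (hψ : ψ.IsPrimitive) (c : ι → R) :
    ∑ x : ι → R, ψ (∑ i, x i * c i) =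
      if c = 0 then (Fintype.card R : ℂ) ^ Fintype.card ι else 0 := by
  simp_rw [ψ.map_sum_eq_prod]
  rw [← Fintype.prod_sum fun i z => ψ (z * c i)]
  simp_rw [AddChar.sum_mulShift _ hψ, apply_ite Nat.cast, Nat.cast_zero]
  rw [prod_ite_zero, prod_const, card_univ]
  simp [funext_iff]

theorem Fin.sum_pi_succ {R M : Type*} [Fintype R] [AddCommMonoid M] {n : ℕ}
    (f : (Fin (n + 1) → R) → M) : ∑ x, f x = ∑ a, ∑ x : Fin n → R, f (Fin.cons a x) := by
  rw [← (Fin.consEquiv fun _ => R).sum_comp, Fintype.sum_prod_type]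
  rfl

theorem Fin.sum_pi_four {R M : Type*} [Fintype R] [AddCommMonoid M] (f : (Fin 4 → R) → M) :
    ∑ x, f x = ∑ a, ∑ b, ∑ c, ∑ d, f ![a, b, c, d] := by
  simp only [Fin.sum_pi_succ, Fintype.sum_unique]
  rfl

theorem sum_range_natCast_zmod {M : Type*} [AddCommMonoid M] (q : ℕ) [NeZero q]
    (f : ZMod q → M) : ∑ k ∈ range q, f k = ∑ z, f z := by
  refine (sum_nbij ZMod.val (fun z _ => mem_range.2 (ZMod.val_lt z))
    (ZMod.val_injective q).injOn (fun k hk => ?_) fun z _ => by rw [ZMod.natCast_zmod_val]).symm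
  exact ⟨k, mem_coe.2 (mem_univ _), ZMod.val_cast_of_lt (mem_range.1 hk)⟩

theorem sum_Icc_one_natCast_zmod {M : Type*} [AddCommMonoid M] (q : ℕ) [NeZero q]
    (f : ZMod q → M) : ∑ k ∈ Icc 1 q, f k = ∑ z, f z := by
  rw [← Ico_add_one_right_eq_Icc, sum_Ico_eq_sum_range, add_tsub_cancel_right,
    ← Equiv.sum_comp (Equiv.addLeft (1 : ZMod q)), ← sum_range_natCast_zmod]
  simp

section FormQ

variable {R ι : Type*} [CommRing R] [Fintype ι]

def formQ (n : R) (x : ι → R) : R := ∑ i, x i ^ 2 + (∑ i, x i - n) ^ 2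

theorem formQ_add_sub (n : R) (x h : ι → R) :
    formQ n (x + h) - formQ n x = ∑ i, x i * (2 * (h i + ∑ j, h j)) + (formQ n h - n ^ 2) := by
  have hsq : ∑ i, (x i + h i) ^ 2 = ∑ i, x i ^ 2 + 2 * ∑ i, x i * h i + ∑ i, h i ^ 2 := by
    simp only [add_sq, sum_add_distrib, mul_sum, mul_assoc]
  have hlin : ∑ i, x i * (2 * (h i + ∑ j, h j)) =
      2 * ∑ i, x i * h i + 2 * (∑ j, h j) * ∑ i, x i := by
    rw [mul_sum, mul_sum, ← sum_add_distrib]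
    exact sum_congr rfl fun _ _ => by ring
  simp only [formQ, Pi.add_apply, hsq, sum_add_distrib, hlin]
  ring

theorem sum_add_sum_eq_card_add_one_mul (h : ι → R) :
    ∑ i, (h i + ∑ j, h j) = ((Fintype.card ι + 1 : ℕ) : R) * ∑ j, h j := by
  rw [sum_add_distrib, sum_const, card_univ, nsmul_eq_mul]
  push_cast
  ring

variable [Fintype R] [DecidableEq R] [DecidableEq ι]

variable (R ι) in
def formQRadical : Finset (ι → R) := {h | ∀ i, 2 * (h i + ∑ j, h j) = 0}

theorem norm_sum_formQ_sq_le {ψ : AddChar R ℂ} (hψ : ψ.IsPrimitive) {a : R} (ha : IsUnit a)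
    (n : R) : ‖∑ x : ι → R, ψ (a * formQ n x)‖ ^ 2 ≤
      Fintype.card R ^ Fintype.card ι * #(formQRadical R ι) := by
  have hcorr (h : ι → R) : ‖∑ x, ψ (a * formQ n (x + h)) * conj (ψ (a * formQ n x))‖ =
      if h ∈ formQRadical R ι then (Fintype.card R : ℝ) ^ Fintype.card ι else 0 := by
    have hphase (x : ι → R) : ψ (a * formQ n (x + h)) * conj (ψ (a * formQ n x)) =
        ψ (∑ i, x i * (a * (2 * (h i + ∑ j, h j)))) * ψ (a * (formQ n h - n ^ 2)) := by
      rw [← AddChar.map_neg_eq_conj, ← AddChar.map_add_eq_mul, ← AddChar.map_add_eq_mul,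
        ← mul_neg, ← mul_add, ← sub_eq_add_neg, formQ_add_sub, mul_add, mul_sum]
      simp only [mul_left_comm a]
    simp only [hphase, ← sum_mul, AddChar.sum_pi_sum_mul_eq_ite hψ, norm_mul, AddChar.norm_apply,
      mul_one, formQRadical, mem_filter_univ, funext_iff, Pi.zero_apply, ha.mul_right_eq_zero]
    split_ifs <;> simp
  calc ‖∑ x : ι → R, ψ (a * formQ n x)‖ ^ 2
      ≤ ∑ h, ‖∑ x, ψ (a * formQ n (x + h)) * conj (ψ (a * formQ n x))‖ :=
        norm_sum_sq_le_sum_norm_sum_mul_conj _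
    _ = Fintype.card R ^ Fintype.card ι * #(formQRadical R ι) := by
        simp only [hcorr, sum_ite_mem, univ_inter, sum_const, nsmul_eq_mul]
        ring

theorem card_formQRadical_le_of_isUnit_two (h2 : IsUnit (2 : R)) :
    #(formQRadical R ι) ≤ #{s : R | ((Fintype.card ι + 1 : ℕ) : R) * s = 0} := by
  have hmem {h : ι → R} (hh : h ∈ formQRadical R ι) (i : ι) : h i + ∑ j, h j = 0 := by
    simp only [formQRadical, mem_filter_univ, h2.mul_right_eq_zero] at hh
    exact hh i
  refine card_le_card_of_injOn (fun h => ∑ j, h j) (fun h hh => ?_) fun h hh h' hh' hs => ?_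
  · simpa [sum_add_sum_eq_card_add_one_mul] using sum_eq_zero (s := univ) fun i _ => hmem hh i
  · funext i
    rw [eq_neg_of_add_eq_zero_left (hmem hh i), eq_neg_of_add_eq_zero_left (hmem hh' i)]
    exact congrArg Neg.neg hs

theorem card_formQRadical_le_of_isUnit_card_add_one
    (hc : IsUnit ((Fintype.card ι + 1 : ℕ) : R)) :
    #(formQRadical R ι) ≤ #{s : R | 2 * s = 0} ^ Fintype.card ι := by
  have hsum {h h' : ι → R} (hu : (fun i => h i + ∑ j, h j) = fun i => h' i + ∑ j, h' j) :
      ∑ j, h j = ∑ j, h' j := by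
    apply hc.mul_left_cancel
    rw [← sum_add_sum_eq_card_add_one_mul, ← sum_add_sum_eq_card_add_one_mul, hu]
  calc #(formQRadical R ι)
      ≤ #(Fintype.piFinset fun _ : ι => ({s | 2 * s = 0} : Finset R)) := by
        refine card_le_card_of_injOn (fun h i => h i + ∑ j, h j) (fun h hh => ?_)
          fun h _ h' _ hu => ?_
        · simpa [formQRadical] using hh
        · funext i
          have := congrFun hu i
          simp only [hsum hu] at this
          exact add_right_cancel this
    _ = #{s : R | 2 * s = 0} ^ Fintype.card ι := by
        rw [Fintype.card_piFinset, prod_const, card_univ]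

end FormQ

theorem ZMod.card_natCast_mul_eq_zero_le (m : ℕ) [NeZero m] {d : ℕ} (hd : 0 < d) :
    #{x : ZMod m | (d : ZMod m) * x = 0} ≤ d := by
  simpa only [nsmul_eq_mul] using IsAddCyclic.card_nsmul_eq_zero_le (α := ZMod m) hd

theorem card_filter_mul_eq_zero_of_isUnit {R : Type*} [Ring R] [Fintype R] [DecidableEq R]
    {c : R} (hc : IsUnit c) : #{x : R | c * x = 0} = 1 := by
  simp [hc.mul_right_eq_zero, filter_eq']

theorem expSumS_eq_sum_stdAddChar (n q a : ℕ) [NeZero q] :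
    expSumS n q a =
      ∑ x : Fin 4 → ZMod q, ZMod.stdAddChar ((a : ZMod q) * formQ (n : ZMod q) x) := by
  have hterm (x₁ x₂ x₃ x₄ : ℕ) :
      Complex.exp (2 * Real.pi * Complex.I * ((a : ℂ) / (q : ℂ)) *
        ((x₁ : ℂ) ^ 2 + (x₂ : ℂ) ^ 2 + (x₃ : ℂ) ^ 2 + (x₄ : ℂ) ^ 2 +
          ((x₁ : ℂ) + x₂ + x₃ + x₄ - (n : ℂ)) ^ 2)) =
      ZMod.stdAddChar ((a : ZMod q) * formQ (n : ZMod q) ![(x₁ : ZMod q), x₂, x₃, x₄]) := by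
    have hcast : (a : ZMod q) * formQ (n : ZMod q) ![(x₁ : ZMod q), x₂, x₃, x₄] =
        ((a * ((x₁ : ℤ) ^ 2 + (x₂ : ℤ) ^ 2 + (x₃ : ℤ) ^ 2 + (x₄ : ℤ) ^ 2 +
          ((x₁ : ℤ) + x₂ + x₃ + x₄ - n) ^ 2) : ℤ) : ZMod q) := by
      simp [formQ, Fin.sum_univ_four]
    rw [hcast, ZMod.stdAddChar_coe]
    congr 1
    push_cast
    ring
  simp only [expSumS, hterm, Fin.sum_pi_four, ← sum_Icc_one_natCast_zmod q]

theorem norm_expSumS_le_of_card_formQRadical_le (n q a : ℕ) [NeZero q] (ha : a.Coprime q)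
    {c : ℕ} (hc : #(formQRadical (ZMod q) (Fin 4)) ≤ c) :
    ‖expSumS n q a‖ ≤ √c * (q : ℝ) ^ 2 := by
  have hsq := norm_sum_formQ_sq_le (ι := Fin 4) (ZMod.isPrimitive_stdAddChar q)
    ((ZMod.isUnit_iff_coprime a q).2 ha) (n : ZMod q)
  rw [← expSumS_eq_sum_stdAddChar, ZMod.card, Fintype.card_fin] at hsq
  refine le_of_pow_le_pow_left₀ two_ne_zero (by positivity) ?_
  calc ‖expSumS n q a‖ ^ 2 ≤ (q : ℝ) ^ 4 * #(formQRadical (ZMod q) (Fin 4)) := hsq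
    _ ≤ (q : ℝ) ^ 4 * c := by gcongr
    _ = (√c * (q : ℝ) ^ 2) ^ 2 := by rw [mul_pow, Real.sq_sqrt c.cast_nonneg]; ring

theorem expSumS_bound_general (n p k a : ℕ) (hp : p.Prime)
    (ha : Nat.Coprime a (p ^ k)) :
    (¬ p ∣ 10 → ‖expSumS n (p ^ k) a‖ ≤ ((p : ℝ) ^ k) ^ 2) ∧
    (p = 5 → ‖expSumS n (p ^ k) a‖ ≤ Real.sqrt 5 * ((p : ℝ) ^ k) ^ 2) ∧
    (p = 2 → ‖expSumS n (p ^ k) a‖ ≤ 4 * ((p : ℝ) ^ k) ^ 2) := by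
  have : NeZero (p ^ k) := ⟨pow_ne_zero k hp.ne_zero⟩
  have hbound {c : ℕ} (hc : #(formQRadical (ZMod (p ^ k)) (Fin 4)) ≤ c) :
      ‖expSumS n (p ^ k) a‖ ≤ √c * ((p : ℝ) ^ k) ^ 2 := by
    exact_mod_cast norm_expSumS_le_of_card_formQRadical_le n (p ^ k) a ha hc
  have hunit {d : ℕ} (hd : d.Coprime p) : IsUnit (d : ZMod (p ^ k)) :=
    (ZMod.isUnit_iff_coprime d _).2 (hd.pow_right k)
  refine ⟨fun h10 => ?_, fun h5 => ?_, fun h2 => ?_⟩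
  · have h2h5 : IsUnit ((2 : ℕ) * (5 : ℕ) : ZMod (p ^ k)) := by
      exact_mod_cast hunit (hp.coprime_iff_not_dvd.2 h10).symm
    have h2 : IsUnit (2 : ZMod (p ^ k)) := by exact_mod_cast isUnit_of_mul_isUnit_left h2h5
    have h5 : IsUnit ((4 + 1 : ℕ) : ZMod (p ^ k)) := isUnit_of_mul_isUnit_right h2h5
    simpa using hbound ((card_formQRadical_le_of_isUnit_two (ι := Fin 4) h2).trans
      (card_filter_mul_eq_zero_of_isUnit h5).le)
  · subst h5
    have h2 : IsUnit (2 : ZMod (5 ^ k)) := by exact_mod_cast hunit (d := 2) (by norm_num)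
    simpa using hbound ((card_formQRadical_le_of_isUnit_two (ι := Fin 4) h2).trans
      (ZMod.card_natCast_mul_eq_zero_le (5 ^ k) (d := 4 + 1) (by norm_num)))
  · subst h2
    have h5 : IsUnit ((4 + 1 : ℕ) : ZMod (2 ^ k)) := hunit (by norm_num)
    have hc := (card_formQRadical_le_of_isUnit_card_add_one (ι := Fin 4) h5).trans
      (Nat.pow_le_pow_left (ZMod.card_natCast_mul_eq_zero_le (2 ^ k) two_pos) _)
    have h16 : √(16 : ℝ) = 4 := by
      rw [show (16 : ℝ) = 4 ^ 2 by norm_num, Real.sqrt_sq (by norm_num)]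
    simpa [h16] using hbound hc

theorem expSumS_bound (n p k a : ℕ) (hp : p.Prime) (hk : 1 ≤ k)
    (ha : Nat.Coprime a (p ^ k)) :
    (¬ p ∣ 10 → ‖expSumS n (p ^ k) a‖ ≤ ((p : ℝ) ^ k) ^ 2) ∧
    (p = 5 → ‖expSumS n (p ^ k) a‖ ≤ Real.sqrt 5 * ((p : ℝ) ^ k) ^ 2) ∧
    (p = 2 → ‖expSumS n (p ^ k) a‖ ≤ 4 * ((p : ℝ) ^ k) ^ 2) :=
  expSumS_bound_general n p k a hp ha
end
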